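/- For every loopless digraph D, χ⃗_f(D) ≤ χ⃗*(D) ≤ χ⃗_c(D), where χ⃗_f is the fractional dichromatic number, χ⃗* the star dichromatic number, and χ⃗_c the circular dichromatic number. -/

import Mathlib

open Finset

variable {V : Type*}

/-- `v :: l` forms a directed cycle of the digraph with arc relation `E`:
the vertices are pairwise distinct and each one has an arc to the next, cyclically. -/
def IsDicycle (E : V → V → Prop) (v : V) (l : List V) : Prop :=
  (v :: l).Nodup ∧ List.Chain E v (l ++ [v])

/-- The vertex set `A` induces an acyclic subdigraph of the digraph `E`:
no directed cycle of `E` has all of its vertices in `A`. -/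
def AcyclicOn (E : V → V → Prop) (A : Set V) : Prop :=
  ∀ v l, IsDicycle E v l → ¬ (∀ x ∈ v :: l, x ∈ A)

/-- The open arc of length 1 in `ℝ/pℤ` starting at (the image of) `a`. -/
def unitArc (p a : ℝ) : Set (AddCircle p) :=
  (fun x : ℝ => (x : AddCircle p)) '' Set.Ioo a (a + 1)

/-- An acyclic `p`-colouring of the digraph `E` : the preimage of every open arc
of length 1 induces an acyclic subdigraph. -/
def IsAcyclicColouring (E : V → V → Prop) (p : ℝ) (c : V → AddCircle p) : Prop :=
  ∀ a : ℝ, AcyclicOn E (c ⁻¹' unitArc p a)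

/-- The star dichromatic number of a digraph. -/
noncomputable def starDichromatic (E : V → V → Prop) : ℝ :=
  sInf {p : ℝ | 1 ≤ p ∧ ∃ c : V → AddCircle p, IsAcyclicColouring E p c}

/-- A weak circular `p`-colouring in the sense of Bokal et al. -/
def IsWeakCircularColouring (E : V → V → Prop) (p : ℝ) (c : V → AddCircle p) : Prop :=
  (∀ u w, E u w → c u = c w ∨
    ∃ r : ℝ, r ∈ Set.Ico (0 : ℝ) p ∧ (r : AddCircle p) = c w - c u ∧ 1 ≤ r) ∧
  ∀ t : AddCircle p, AcyclicOn E (c ⁻¹' {t})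

/-- The circular dichromatic number of a digraph. -/
noncomputable def circularDichromatic (E : V → V → Prop) : ℝ :=
  sInf {p : ℝ | 1 ≤ p ∧ ∃ c : V → AddCircle p, IsWeakCircularColouring E p c}

/-- The fractional dichromatic number: the optimal value of the covering linear
program over the acyclic vertex subsets. -/
noncomputable def fracDichromatic [Fintype V] [DecidableEq V] (E : V → V → Prop) : ℝ :=
  sInf {r : ℝ | ∃ x : Finset V → ℝ, (∀ A, 0 ≤ x A) ∧
    (∀ A : Finset V, x A ≠ 0 → AcyclicOn E ↑A) ∧
    (∀ v : V, 1 ≤ ∑ A ∈ Finset.univ.filter (fun A : Finset V => v ∈ A), x A) ∧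
    r = ∑ A : Finset V, x A}

/-- The cyclic interval `{i, i+1, ..., i+d-1}` in `ℤ/kℤ`. -/
def cycInterval (k : ℕ) (i : ZMod k) (d : ℕ) : Set (ZMod k) :=
  {j : ZMod k | ∃ t : ℕ, t < d ∧ j = i + (t : ZMod k)}

/-- An acyclic `(k,d)`-colouring of the digraph `E`. -/
def IsAcyclicKDColouring (E : V → V → Prop) (k d : ℕ) (c : V → ZMod k) : Prop :=
  ∀ i : ZMod k, AcyclicOn E (c ⁻¹' cycInterval k i d)

/-- The dichromatic number: the least `k` such that the vertex set can be partitioned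
into `k` classes each inducing an acyclic subdigraph. -/
noncomputable def dichromatic (E : V → V → Prop) : ℕ :=
  sInf {k : ℕ | ∃ c : V → Fin k, ∀ i : Fin k, AcyclicOn E (c ⁻¹' {i})}

/-- `v :: l` forms a cycle of the simple graph `G` (of length at least 3). -/
def IsGraphCycle (G : SimpleGraph V) (v : V) (l : List V) : Prop :=
  3 ≤ (v :: l).length ∧ (v :: l).Nodup ∧ List.Chain G.Adj v (l ++ [v])

/-- The vertex set `A` induces a forest (acyclic subgraph) in the simple graph `G`. -/
def ForestOn (G : SimpleGraph V) (A : Set V) : Prop :=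
  ∀ v l, IsGraphCycle G v l → ¬ (∀ x ∈ v :: l, x ∈ A)

/-- A `(k,d)`-tree-colouring of a graph. -/
def IsTreeColouring (G : SimpleGraph V) (k d : ℕ) (c : V → ZMod k) : Prop :=
  ∀ i : ZMod k, ForestOn G (c ⁻¹' cycInterval k i d)

/-- The circular vertex arboricity of a graph. -/
noncomputable def circularVertexArboricity (G : SimpleGraph V) : ℝ :=
  sInf {r : ℝ | ∃ k d : ℕ, 1 ≤ d ∧ d ≤ k ∧
    (∃ c : V → ZMod k, IsTreeColouring G k d c) ∧ r = (k : ℝ) / d}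

/-- `E` is an orientation of the simple graph `G`: for each edge exactly one of the
two possible arcs is present, and there are no other arcs. -/
def IsOrientation (G : SimpleGraph V) (E : V → V → Prop) : Prop :=
  ∀ u w, ((E u w ∨ E w u) ↔ G.Adj u w) ∧ ¬ (E u w ∧ E w u)

/-- The star dichromatic number of a graph: the maximum over all orientations. -/
noncomputable def starDichromaticGraph (G : SimpleGraph V) : ℝ :=
  sSup {r : ℝ | ∃ E : V → V → Prop, IsOrientation G E ∧ r = starDichromatic E}

/-- The fractional dichromatic number of a graph: the maximum over all orientations. -/
noncomputable def fracDichromaticGraph [Fintype V] [DecidableEq V] (G : SimpleGraph V) : ℝ :=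
  sSup {r : ℝ | ∃ E : V → V → Prop, IsOrientation G E ∧ r = fracDichromatic E}

/-- The fractional chromatic number of a graph: the optimal value of the covering
linear program over the independent vertex subsets. -/
noncomputable def fractionalChromatic [Fintype V] [DecidableEq V] (G : SimpleGraph V) : ℝ :=
  sInf {r : ℝ | ∃ x : Finset V → ℝ, (∀ A, 0 ≤ x A) ∧
    (∀ A : Finset V, x A ≠ 0 → ∀ u ∈ A, ∀ w ∈ A, ¬ G.Adj u w) ∧
    (∀ v : V, 1 ≤ ∑ A ∈ Finset.univ.filter (fun A : Finset V => v ∈ A), x A) ∧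
    r = ∑ A : Finset V, x A}

/-- A `(k,d)`-colouring of a graph in the sense of Vince: colours of adjacent vertices
have circular `k`-distance at least `d`. -/
def IsVinceColouring (G : SimpleGraph V) (k d : ℕ) (c : V → ZMod k) : Prop :=
  ∀ u w, G.Adj u w → d ≤ (c u - c w).val ∧ d ≤ (c w - c u).val

/-- Vince's star (circular) chromatic number of a graph. -/
noncomputable def starChromatic (G : SimpleGraph V) : ℝ :=
  sInf {r : ℝ | ∃ k d : ℕ, 1 ≤ d ∧ d ≤ k ∧
    (∃ c : V → ZMod k, IsVinceColouring G k d c) ∧ r = (k : ℝ) / d}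

/-- The circulant digraph `C⃗(k,d)` on `ℤ/kℤ`: each vertex `i` has the outgoing arcs
`(i, i+d), (i, i+d+1), …, (i, i+k-1)`. -/
def circulantDigraph (k d : ℕ) : ZMod k → ZMod k → Prop :=
  fun i j => ∃ t : ℕ, d ≤ t ∧ t < k ∧ j = i + (t : ZMod k)

/-- The directed cycle `C⃗_n` on `ℤ/nℤ`. -/
def dirCycle (n : ℕ) : ZMod n → ZMod n → Prop :=
  fun i j => j = i + 1

/-- The digraph `D^s` obtained from `D` by adding a dominating source `none`. -/
def addSource (E : V → V → Prop) : Option V → Option V → Prop :=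
  fun a b => match a, b with
  | none, some _ => True
  | some u, some w => E u w
  | _, none => False

/-- The wheel graph `W_k`: a cycle on `ℤ/kℤ` together with a hub `none` adjacent to
every cycle vertex. -/
def wheelGraph (k : ℕ) : SimpleGraph (Option (ZMod k)) :=
  SimpleGraph.fromRel (fun a b => match a, b with
    | none, some _ => True
    | some i, some j => j = i + 1
    | _, none => False)

/-! A weak circular colouring is an acyclic colouring: on the preimage of an open unit arc, lift
the colours into an interval of length 1. Along an arc the lift either stays put (equal colours)
or strictly decreases, because the colour moves forward by at least 1 around the circle, which
from inside an interval of length 1 can only be done by wrapping around. So every directed cycle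
there is monochromatic, hence absent.

An acyclic `p`-colouring gives, for every point `t` of `ℝ/pℤ`, the acyclic set of vertices whose
colour lies within distance `1/2` of `t`. Weighting each such set by the Haar measure of the
points `t` producing it is a fractional cover: each vertex is covered with weight equal to the
measure of a ball of radius `1/2`, that is `1`, and the total weight is `p`.

Both infima range over nonempty sets since, for a loopless digraph, numbering the vertices
`0, …, n - 1` is a weak circular `(n + 1)`-colouring. -/

open MeasureTheory Metric

section

variable {E : V → V → Prop}

theorem AcyclicOn.mono {A B : Set V} (hB : AcyclicOn E B) (hAB : A ⊆ B) : AcyclicOn E A :=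
  fun v l hvl hA => hB v l hvl fun x hx => hAB (hA x hx)

theorem acyclicOn_of_subsingleton (hE : ∀ v, ¬ E v v) {A : Set V} (hA : A.Subsingleton) :
    AcyclicOn E A := by
  rintro v (_ | ⟨w, l⟩) ⟨hnd, hch⟩ hmem
  · exact hE v (List.isChain_pair.1 hch)
  · have hwv : w = v := hA (hmem w (by simp)) (hmem v (by simp))
    exact (List.nodup_cons.1 hnd).1 (by simp [hwv])

theorem AcyclicOn.of_antitone_on_arcs {α : Type*} [PartialOrder α] {A : Set V} (f : V → α)
    (hf : ∀ u ∈ A, ∀ w ∈ A, E u w → f w ≤ f u) (hlevel : ∀ t, AcyclicOn E (A ∩ f ⁻¹' {t})) :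
    AcyclicOn E A := by
  rintro v l ⟨hnd, hch⟩ hA
  have hA' : ∀ x ∈ v :: (l ++ [v]), x ∈ A := fun x hx => hA x (by simp at hx ⊢; tauto)
  have hpw : ((v :: (l ++ [v])).map f).Pairwise (· ≥ ·) := by
    refine List.isChain_iff_pairwise.1 ((List.isChain_map f).2 ?_)
    exact hch.imp_of_mem_imp fun u w hu hw huw => hf u (hA' u hu) w (hA' w hw) huw
  simp only [List.map_cons, List.map_append, List.map_nil, List.pairwise_cons,
    List.pairwise_append, List.mem_append, List.mem_map, List.mem_singleton] at hpw
  refine hlevel (f v) v l ⟨hnd, hch⟩ fun x hx => ⟨hA x hx, ?_⟩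
  rcases List.mem_cons.1 hx with rfl | hx
  · rfl
  · exact le_antisymm (hpw.1 _ (Or.inl ⟨x, hx, rfl⟩)) (hpw.2.2.2 _ ⟨x, hx, rfl⟩ _ rfl)

theorem lt_of_coe_sub_eq_of_one_le {p a x y r : ℝ} (hx : x ∈ Set.Ioo a (a + 1))
    (hy : y ∈ Set.Ioo a (a + 1)) (hr : r ∈ Set.Ico 0 p) (hr1 : 1 ≤ r)
    (h : ((y - x : ℝ) : AddCircle p) = r) : y < x := by
  obtain ⟨k, hk⟩ := (AddCircle.coe_eq_zero_iff p).1
    (by rw [AddCircle.coe_sub, ← h, sub_self] : ((r - (y - x) : ℝ) : AddCircle p) = 0)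
  rw [zsmul_eq_mul] at hk
  rcases le_or_gt k 0 with hk0 | hk0
  · have : (k : ℝ) * p ≤ 0 :=
      mul_nonpos_of_nonpos_of_nonneg (by exact_mod_cast hk0) (by linarith [hr.1, hr.2])
    linarith [hx.1, hy.2]
  · have : p ≤ (k : ℝ) * p :=
      le_mul_of_one_le_left (by linarith [hr.1, hr.2]) (by exact_mod_cast hk0)
    linarith [hr.2]

theorem eq_of_coe_eq_coe_of_mem_Ioo {p a x y : ℝ} (hp : 1 ≤ p) (hx : x ∈ Set.Ioo a (a + 1))
    (hy : y ∈ Set.Ioo a (a + 1)) (h : (x : AddCircle p) = y) : x = y := by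
  have : Fact (0 < p) := ⟨by linarith⟩
  exact (AddCircle.coe_eq_coe_iff_of_mem_Ico ⟨hx.1.le, by linarith [hx.2]⟩
    ⟨hy.1.le, by linarith [hy.2]⟩).1 h

theorem IsWeakCircularColouring.isAcyclicColouring {p : ℝ} (hp : 1 ≤ p)
    {c : V → AddCircle p} (hc : IsWeakCircularColouring E p c) : IsAcyclicColouring E p c := by
  intro a
  have hlift : ∀ v ∈ c ⁻¹' unitArc p a, ∃ x ∈ Set.Ioo a (a + 1), (x : AddCircle p) = c v :=
    fun v hv => hv
  choose! f hf hfc using hlift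
  refine AcyclicOn.of_antitone_on_arcs f (fun u hu w hw huw => ?_) fun t => ?_
  · rcases hc.1 u w huw with hcuw | ⟨r, hr, hrc, hr1⟩
    · exact (eq_of_coe_eq_coe_of_mem_Ioo hp (hf u hu) (hf w hw)
        (by rw [hfc u hu, hfc w hw, hcuw])).ge
    · exact (lt_of_coe_sub_eq_of_one_le (hf u hu) (hf w hw) hr hr1
        (by rw [AddCircle.coe_sub, hrc, hfc u hu, hfc w hw])).le
  · refine (hc.2 t).mono fun v ⟨hv, hft⟩ => ?_
    rw [Set.mem_preimage, Set.mem_singleton_iff, ← hfc v hv, hft]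

theorem exists_isWeakCircularColouring [Finite V] (hE : ∀ v, ¬ E v v) :
    ∃ c : V → AddCircle ((Nat.card V : ℝ) + 1),
      IsWeakCircularColouring E ((Nat.card V : ℝ) + 1) c := by
  set n := Nat.card V
  have : Fact (0 < (n : ℝ) + 1) := ⟨by positivity⟩
  let e := Finite.equivFin V
  have he : ∀ v, 0 ≤ ((e v : ℕ) : ℝ) ∧ ((e v : ℕ) : ℝ) + 1 ≤ n := fun v =>
    ⟨by positivity, by exact_mod_cast (e v).isLt⟩
  refine ⟨fun v => ((e v : ℕ) : ℝ), fun u w huw => Or.inr ?_, fun t => ?_⟩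
  · have hne : (e u : ℕ) ≠ e w := fun h => hE u (by rwa [e.injective (Fin.ext h)] at huw ⊢)
    obtain ⟨hu0, hun⟩ := he u
    obtain ⟨hw0, hwn⟩ := he w
    rcases Nat.lt_or_gt_of_ne hne with h | h
    · have h' : ((e u : ℕ) : ℝ) + 1 ≤ (e w : ℕ) := by exact_mod_cast h
      exact ⟨(e w : ℕ) - (e u : ℕ), ⟨by linarith, by linarith⟩, AddCircle.coe_sub _ _ _,
        by linarith⟩
    · have h' : ((e w : ℕ) : ℝ) + 1 ≤ (e u : ℕ) := by exact_mod_cast h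
      refine ⟨(e w : ℕ) - (e u : ℕ) + (n + 1), ⟨by linarith, by linarith⟩, ?_, by linarith⟩
      rw [AddCircle.coe_add_period, AddCircle.coe_sub]
  · refine acyclicOn_of_subsingleton hE fun u hu w hw => e.injective (Fin.ext ?_)
    have hcoe := hu.trans hw.symm
    have hmem : ∀ v, ((e v : ℕ) : ℝ) ∈ Set.Ico 0 (0 + ((n : ℝ) + 1)) := fun v =>
      ⟨(he v).1, by linarith [(he v).2]⟩
    exact_mod_cast (AddCircle.coe_eq_coe_iff_of_mem_Ico (hmem u) (hmem w)).1 hcoe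

theorem unitArc_eq_ball (p a : ℝ) :
    unitArc p a = ball ((a + 1 / 2 : ℝ) : AddCircle p) (1 / 2) := by
  ext z
  rw [mem_ball, dist_eq_norm, QuotientAddGroup.norm_lt_iff]
  constructor
  · rintro ⟨x, hx, rfl⟩
    refine ⟨x - (a + 1 / 2), AddCircle.coe_sub _ _ _, ?_⟩
    rw [Real.norm_eq_abs, abs_lt]
    constructor <;> linarith [hx.1, hx.2]
  · rintro ⟨y, hy, hy'⟩
    rw [Real.norm_eq_abs, abs_lt] at hy'
    refine ⟨y + (a + 1 / 2), ⟨by linarith, by linarith⟩, ?_⟩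
    change ((y + (a + 1 / 2) : ℝ) : AddCircle p) = z
    rw [AddCircle.coe_add, hy, sub_add_cancel]

theorem fracDichromatic_le_measureReal_univ [Fintype V] [DecidableEq V]
    {X : Type*} [MeasurableSpace X] (μ : Measure X) [IsFiniteMeasure μ] (U : V → Set X)
    (hU : ∀ v, MeasurableSet (U v)) (hμU : ∀ v, 1 ≤ μ.real (U v))
    (hacyc : ∀ t, AcyclicOn E {v | t ∈ U v}) : fracDichromatic E ≤ μ.real Set.univ := by
  classical
  let S : X → Finset V := fun t => univ.filter (t ∈ U ·)
  have hS : ∀ A, S ⁻¹' {A} = ⋂ v, if v ∈ A then U v else (U v)ᶜ := by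
    intro A
    ext t
    simp only [Set.mem_preimage, Set.mem_singleton_iff, Finset.ext_iff, Set.mem_iInter, S,
      Finset.mem_filter, Finset.mem_univ, true_and]
    refine forall_congr' fun v => ?_
    split_ifs with hv <;> simp [hv]
  have hSm : ∀ A ∈ (univ : Finset (Finset V)), MeasurableSet (S ⁻¹' {A}) := fun A _ => by
    rw [hS]
    exact MeasurableSet.iInter fun v => by split_ifs; exacts [hU v, (hU v).compl]
  refine csInf_le ⟨0, ?_⟩ ⟨fun A => μ.real (S ⁻¹' {A}), fun A => measureReal_nonneg, ?_, ?_, ?_⟩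
  · rintro r ⟨x, hx, -, -, rfl⟩
    exact Finset.sum_nonneg fun A _ => hx A
  · intro A hA
    obtain ⟨t, rfl⟩ : ∃ t, S t = A := by
      by_contra! h
      exact hA (by simp [Set.preimage, h])
    simpa [S] using hacyc t
  · intro v
    rw [sum_measureReal_preimage_singleton _ fun A _ => hSm A (mem_univ A)]
    convert hμU v using 2
    ext t
    simp [S]
  · rw [sum_measureReal_preimage_singleton _ hSm, coe_univ, Set.preimage_univ]

theorem IsAcyclicColouring.fracDichromatic_le [Fintype V] [DecidableEq V]
    {p : ℝ} (hp : 1 ≤ p) {c : V → AddCircle p} (hc : IsAcyclicColouring E p c) :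
    fracDichromatic E ≤ p := by
  have : Fact (0 < p) := ⟨by linarith⟩
  have hball : ∀ t : AddCircle p, AcyclicOn E {v | t ∈ ball (c v) (1 / 2)} := by
    intro t
    obtain ⟨a, rfl⟩ := QuotientAddGroup.mk_surjective t
    have := hc (a - 1 / 2)
    rw [unitArc_eq_ball, sub_add_cancel] at this
    convert this using 2
    exact Set.ext fun v => mem_ball_comm
  have hvol : ∀ v, volume.real (ball (c v) (1 / 2)) = 1 := fun v => by
    rw [measureReal_def, ← measure_congr AddCircle.closedBall_ae_eq_ball,
      AddCircle.volume_closedBall, min_eq_right (by linarith)]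
    norm_num
  calc fracDichromatic E ≤ volume.real (Set.univ : Set (AddCircle p)) :=
        fracDichromatic_le_measureReal_univ volume _ (fun _ => measurableSet_ball)
          (fun v => (hvol v).ge) hball
    _ = p := by rw [measureReal_def, AddCircle.measure_univ, ENNReal.toReal_ofReal (by linarith)]

end

theorem stmt5_general {V : Type*} [Fintype V] [DecidableEq V]
    (E : V → V → Prop) (hE : ∀ v, ¬ E v v) :
    fracDichromatic E ≤ starDichromatic E ∧
    starDichromatic E ≤ circularDichromatic E := by
  have hcirc : {p : ℝ | 1 ≤ p ∧ ∃ c : V → AddCircle p, IsWeakCircularColouring E p c}.Nonempty :=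
    ⟨_, by linarith [(Nat.card V).cast_nonneg (α := ℝ)], exists_isWeakCircularColouring hE⟩
  have hstar : {p : ℝ | 1 ≤ p ∧ ∃ c : V → AddCircle p, IsWeakCircularColouring E p c} ⊆
      {p : ℝ | 1 ≤ p ∧ ∃ c : V → AddCircle p, IsAcyclicColouring E p c} :=
    fun p ⟨hp, c, hc⟩ => ⟨hp, c, hc.isAcyclicColouring hp⟩
  exact ⟨le_csInf (hcirc.mono hstar) fun p ⟨hp, _, hc⟩ => hc.fracDichromatic_le hp,
    csInf_le_csInf ⟨1, fun p hp => hp.1⟩ hcirc hstar⟩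

/-- `χ⃗_f(D) ≤ χ⃗*(D) ≤ χ⃗_c(D)` for every loopless digraph. -/
theorem stmt5 {V : Type*} [Fintype V] [DecidableEq V] [Nonempty V]
    (E : V → V → Prop) (hE : ∀ v, ¬ E v v) :
    fracDichromatic E ≤ starDichromatic E ∧
    starDichromatic E ≤ circularDichromatic E :=
  stmt5_general E hE
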